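/- For every real number 0 < ε < 1, there exists a graph G on some number n₀ ≥ 1 of vertices such that both h_f(G) ≤ ε·n₀ and h_f(Ḡ) ≤ ε·n₀, where Ḡ denotes the complement of G and h_f is the fractional Hadwiger number. Consequently, for every positive integer r, both the complete blow-up G[r] and its complement have Hadwiger number at most ε·r·n₀. -/

import Mathlib

/-!
If `G` has no `t` disjoint, pairwise adjacent sets of at most `s` vertices, a maximal disjoint
family of the small members of a bramble has fewer than `t` members, and its at most `s (t - 1)`
vertices meet every small member; the other members have more than `s` vertices each. Hence
`h_f(G) ≤ s (t - 1) + n / (s + 1)`.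

In a uniformly random graph a fixed such family is pairwise adjacent with probability at most
`(1 - 2 ^ (-s²)) ^ (t choose 2)`, the pairs involving disjoint sets of potential edges; there are
at most `(n + 1) ^ (s t)` families, and the complement of a random graph is random. For
`s ≈ 2 / ε`, `t ≈ ε n / (2 s)` and large `n` the union bound leaves a graph `G` for which both
`h_f(G)` and `h_f(Ḡ)` are at most `ε n`.

The branch sets of a clique minor of `G[r]`, or of its complement (a subgraph of `Ḡ[r]`), project
to a bramble in which each vertex lies in at most `r` members, so `h(G[r]) ≤ r h_f(G)`.
-/

open Finset

/-- Any two members of a bramble either share a vertex or are joined by an edge,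
and each member induces a connected subgraph. -/
def IsBramble {V : Type} (G : SimpleGraph V) (B : Finset (Finset V)) : Prop :=
  (∀ A ∈ B, (G.induce (A : Set V)).Connected) ∧
    ∀ A ∈ B, ∀ A' ∈ B, (∃ v, v ∈ A ∧ v ∈ A') ∨ ∃ a ∈ A, ∃ b ∈ A', G.Adj a b

/-- A strong bramble: any two (possibly equal) members are joined by an edge. -/
def IsStrongBramble {V : Type} (G : SimpleGraph V) (B : Finset (Finset V)) : Prop :=
  (∀ A ∈ B, (G.induce (A : Set V)).Connected) ∧
    ∀ A ∈ B, ∀ A' ∈ B, ∃ a ∈ A, ∃ b ∈ A', G.Adj a b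

/-- A valid weighting: nonnegative weights whose total at every vertex is at most 1. -/
def IsValidWeight {V : Type} [DecidableEq V] (B : Finset (Finset V)) (w : Finset V → ℝ) : Prop :=
  (∀ A ∈ B, 0 ≤ w A) ∧ ∀ v : V, ∑ A ∈ B.filter (fun A => v ∈ A), w A ≤ 1

/-- The fractional Hadwiger number. -/
noncomputable def fracHadwiger {V : Type} [Fintype V] [DecidableEq V] (G : SimpleGraph V) : ℝ :=
  sSup {h : ℝ | ∃ B : Finset (Finset V), ∃ w : Finset V → ℝ,
    IsBramble G B ∧ IsValidWeight B w ∧ h = ∑ A ∈ B, w A}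

/-- The r-integral Hadwiger number: all weights multiples of 1/r. -/
noncomputable def rIntHadwiger {V : Type} [Fintype V] [DecidableEq V]
    (G : SimpleGraph V) (r : ℕ) : ℝ :=
  sSup {h : ℝ | ∃ B : Finset (Finset V), ∃ w : Finset V → ℝ,
    IsBramble G B ∧ IsValidWeight B w ∧ (∀ A ∈ B, ∃ k : ℕ, w A = k / r) ∧
    h = ∑ A ∈ B, w A}

/-- The lower fractional Hadwiger number (using strong brambles). -/
noncomputable def lowerFracHadwiger {V : Type} [Fintype V] [DecidableEq V]
    (G : SimpleGraph V) : ℝ :=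
  sSup {h : ℝ | ∃ B : Finset (Finset V), ∃ w : Finset V → ℝ,
    IsStrongBramble G B ∧ IsValidWeight B w ∧ h = ∑ A ∈ B, w A}

/-- The lower r-integral Hadwiger number. -/
noncomputable def lowerRIntHadwiger {V : Type} [Fintype V] [DecidableEq V]
    (G : SimpleGraph V) (r : ℕ) : ℝ :=
  sSup {h : ℝ | ∃ B : Finset (Finset V), ∃ w : Finset V → ℝ,
    IsStrongBramble G B ∧ IsValidWeight B w ∧ (∀ A ∈ B, ∃ k : ℕ, w A = k / r) ∧
    h = ∑ A ∈ B, w A}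

/-- `G` has a clique minor of order `t`. -/
def HasCliqueMinor {V : Type} (G : SimpleGraph V) (t : ℕ) : Prop :=
  ∃ f : Fin t → Finset V,
    (∀ i, (f i).Nonempty) ∧
    (∀ i, (G.induce ((f i : Set V))).Connected) ∧
    (∀ i j, i ≠ j → Disjoint (f i) (f j)) ∧
    (∀ i j, i ≠ j → ∃ a ∈ f i, ∃ b ∈ f j, G.Adj a b)

/-- `G` has a clique minor of order `t` and breadth at most `d` (each part has ≤ d vertices). -/
def HasCliqueMinorBreadth {V : Type} (G : SimpleGraph V) (t : ℕ) (d : ℝ) : Prop :=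
  ∃ f : Fin t → Finset V,
    (∀ i, (f i).Nonempty) ∧
    (∀ i, (G.induce ((f i : Set V))).Connected) ∧
    (∀ i j, i ≠ j → Disjoint (f i) (f j)) ∧
    (∀ i j, i ≠ j → ∃ a ∈ f i, ∃ b ∈ f j, G.Adj a b) ∧
    (∀ i, ((f i).card : ℝ) ≤ d)

/-- The Hadwiger number: the largest order of a clique minor. -/
noncomputable def hadwigerNumber {V : Type} (G : SimpleGraph V) : ℕ :=
  sSup {t : ℕ | HasCliqueMinor G t}

/-- The lexicographic product of two graphs. -/
def lexProd {α β : Type} (G : SimpleGraph α) (H : SimpleGraph β) : SimpleGraph (α × β) where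
  Adj x y := G.Adj x.1 y.1 ∨ (x.1 = y.1 ∧ H.Adj x.2 y.2)
  symm := by
    refine ⟨?_⟩
    intro x y hxy
    rcases hxy with h | ⟨h1, h2⟩
    · exact Or.inl h.symm
    · exact Or.inr ⟨h1.symm, h2.symm⟩
  loopless := by
    refine ⟨?_⟩
    intro x hx
    rcases hx with h | ⟨_, h2⟩
    · exact G.ne_of_adj h rfl
    · exact H.ne_of_adj h2 rfl

/-- The complete blow-up `G[r] = G · K_r`. -/
def completeBlowup {α : Type} (G : SimpleGraph α) (r : ℕ) : SimpleGraph (α × Fin r) :=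
  lexProd G (⊤ : SimpleGraph (Fin r))

/-- The blow-up `G(r) = G · I_r`. -/
def emptyBlowup {α : Type} (G : SimpleGraph α) (r : ℕ) : SimpleGraph (α × Fin r) :=
  lexProd G (⊥ : SimpleGraph (Fin r))

/-- `H` is a minor of `G`: branch sets indexed by the vertices of `H`. -/
def IsMinor {W V : Type} (H : SimpleGraph W) (G : SimpleGraph V) : Prop :=
  ∃ f : W → Finset V,
    (∀ u, (G.induce ((f u : Set V))).Connected) ∧
    (∀ u u', u ≠ u' → Disjoint (f u) (f u')) ∧
    (∀ u u', H.Adj u u' → ∃ a ∈ f u, ∃ b ∈ f u', G.Adj a b)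

/-- The k × k grid graph. -/
def gridGraph (k : ℕ) : SimpleGraph (Fin k × Fin k) where
  Adj a b := (a.1 = b.1 ∧ (a.2.val + 1 = b.2.val ∨ b.2.val + 1 = a.2.val)) ∨
             (a.2 = b.2 ∧ (a.1.val + 1 = b.1.val ∨ b.1.val + 1 = a.1.val))
  symm := by
    refine ⟨?_⟩
    intro a b hab
    rcases hab with ⟨h1, h2⟩ | ⟨h1, h2⟩
    · exact Or.inl ⟨h1.symm, h2.symm⟩
    · exact Or.inr ⟨h1.symm, h2.symm⟩
  loopless := by
    refine ⟨?_⟩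
    intro a ha
    rcases ha with ⟨_, h | h⟩ | ⟨_, h | h⟩ <;> omega


open Function

section Bramble

def HasAdjacentSets {V : Type} (G : SimpleGraph V) (t s : ℕ) : Prop :=
  ∃ T : Fin t → Finset V, (∀ i, #(T i) ≤ s) ∧ Pairwise (Disjoint on T) ∧
    Pairwise fun i j => ∃ a ∈ T i, ∃ b ∈ T j, G.Adj a b

variable {V : Type} {G : SimpleGraph V} {B : Finset (Finset V)} {w : Finset V → ℝ} {s t : ℕ}

lemma IsBramble.nonempty (hB : IsBramble G B) {A : Finset V} (hA : A ∈ B) : A.Nonempty := by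
  obtain ⟨⟨x, hx⟩⟩ := (hB.1 A hA).nonempty
  exact ⟨x, hx⟩

lemma IsBramble.hasAdjacentSets {M : Finset (Finset V)} (hB : IsBramble G B) (hMB : M ⊆ B)
    (hM : (M : Set (Finset V)).PairwiseDisjoint id) (hs : ∀ A ∈ M, #A ≤ s) (ht : t ≤ #M) :
    HasAdjacentSets G t s := by
  let e : Fin t ↪ Finset V :=
    (Fin.castLEEmb ht).trans (M.equivFin.symm.toEmbedding.trans (Function.Embedding.subtype _))
  have he : ∀ i, e i ∈ M := fun i => (M.equivFin.symm _).2
  refine ⟨e, fun i => hs _ (he i), fun i j hij => hM (he i) (he j) (e.injective.ne hij),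
    fun i j hij => ?_⟩
  rcases hB.2 _ (hMB (he i)) _ (hMB (he j)) with ⟨v, hvi, hvj⟩ | hadj
  · exact absurd hvj (disjoint_left.mp (hM (he i) (he j) (e.injective.ne hij)) hvi)
  · exact hadj

lemma exists_pairwiseDisjoint_subset_inter_nonempty [DecidableEq V] (S : Finset (Finset V)) :
    ∃ M ⊆ S, (M : Set (Finset V)).PairwiseDisjoint id ∧
      ∀ A ∈ S, A.Nonempty → (A ∩ M.biUnion id).Nonempty := by
  classical
  obtain ⟨M, hM⟩ := exists_maximal
    (s := S.powerset.filter fun M : Finset (Finset V) => (M : Set (Finset V)).PairwiseDisjoint id)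
    ⟨∅, by simp⟩
  simp only [mem_filter, mem_powerset] at hM
  refine ⟨M, hM.1.1, hM.1.2, fun A hA hAne => ?_⟩
  by_contra hdisj
  rw [not_nonempty_iff_eq_empty, ← disjoint_iff_inter_eq_empty] at hdisj
  have hins : insert A M ⊆ M := by
    refine hM.2 ⟨insert_subset hA hM.1.1, ?_⟩ (subset_insert A M)
    rw [coe_insert]
    exact hM.1.2.insert fun B hB _ => hdisj.mono_right (subset_biUnion_of_mem id hB)
  have hAM : A ⊆ M.biUnion id := subset_biUnion_of_mem id (hins (mem_insert_self A M))
  exact hAne.ne_empty (disjoint_self.mp (hdisj.mono_right hAM))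

variable [DecidableEq V]

lemma IsValidWeight.mono {B' : Finset (Finset V)} (hw : IsValidWeight B w) (h : B' ⊆ B) :
    IsValidWeight B' w :=
  ⟨fun A hA => hw.1 A (h hA), fun v => (sum_le_sum_of_subset_of_nonneg (filter_subset_filter _ h)
    fun A hA _ => hw.1 A (mem_filter.1 hA).1).trans (hw.2 v)⟩

lemma IsValidWeight.sum_mul_card_inter_le (hw : IsValidWeight B w) (U : Finset V) :
    ∑ A ∈ B, w A * #(A ∩ U) ≤ #U :=
  calc ∑ A ∈ B, w A * #(A ∩ U) = ∑ A ∈ B, ∑ _v ∈ A ∩ U, w A := by simp [mul_comm]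
    _ = ∑ v ∈ U, ∑ A ∈ B with v ∈ A, w A :=
        sum_comm' fun A v => by simp only [mem_inter, mem_filter]; tauto
    _ ≤ ∑ _v ∈ U, 1 := sum_le_sum fun v _ => hw.2 v
    _ = #U := by simp

lemma IsValidWeight.sum_le_card_of_inter_nonempty {U : Finset V} (hw : IsValidWeight B w)
    (hU : ∀ A ∈ B, (A ∩ U).Nonempty) : ∑ A ∈ B, w A ≤ #U :=
  calc ∑ A ∈ B, w A ≤ ∑ A ∈ B, w A * #(A ∩ U) := sum_le_sum fun A hA =>
        le_mul_of_one_le_right (hw.1 A hA) (by exact_mod_cast (hU A hA).card_pos)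
    _ ≤ #U := hw.sum_mul_card_inter_le U

lemma IsValidWeight.sum_le_card_div_of_lt_card [Fintype V] (hw : IsValidWeight B w)
    (hB : ∀ A ∈ B, s < #A) : ∑ A ∈ B, w A ≤ Fintype.card V / (s + 1) := by
  rw [le_div_iff₀ (by positivity), sum_mul]
  calc ∑ A ∈ B, w A * (s + 1) ≤ ∑ A ∈ B, w A * #(A ∩ univ) := sum_le_sum fun A hA =>
        mul_le_mul_of_nonneg_left (by rw [inter_univ]; exact_mod_cast hB A hA) (hw.1 A hA)
    _ ≤ Fintype.card V := by simpa using hw.sum_mul_card_inter_le univ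

theorem IsBramble.sum_le_of_not_hasAdjacentSets [Fintype V] (hB : IsBramble G B)
    (hw : IsValidWeight B w) (h : ¬HasAdjacentSets G t s) :
    ∑ A ∈ B, w A ≤ s * (t - 1) + Fintype.card V / (s + 1) := by
  obtain ⟨M, hMS, hM, hhit⟩ :=
    exists_pairwiseDisjoint_subset_inter_nonempty {A ∈ B | #A ≤ s}
  have hMt : #M + 1 ≤ t := by
    by_contra! ht
    exact h (hB.hasAdjacentSets (hMS.trans (filter_subset _ _)) hM
      (fun A hA => (mem_filter.1 (hMS hA)).2) (by omega))
  have hU : (#(M.biUnion id) : ℝ) ≤ s * (t - 1) := by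
    have hcard := card_biUnion_le_card_mul M id s fun A hA => (mem_filter.1 (hMS hA)).2
    have : ((#M : ℕ) : ℝ) + 1 ≤ t := by exact_mod_cast hMt
    calc (#(M.biUnion id) : ℝ) ≤ #M * s := by exact_mod_cast hcard
      _ ≤ (t - 1) * s := by gcongr; linarith
      _ = s * (t - 1) := mul_comm _ _
  rw [← sum_filter_add_sum_filter_not B fun A => #A ≤ s]
  gcongr
  · exact ((hw.mono (filter_subset _ _)).sum_le_card_of_inter_nonempty
      fun A hA => hhit A hA (hB.nonempty (mem_filter.1 hA).1)).trans hU
  · exact (hw.mono (filter_subset _ _)).sum_le_card_div_of_lt_card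
      fun A hA => not_le.1 (mem_filter.1 hA).2

variable [Fintype V]

lemma fracHadwiger_bddAbove (G : SimpleGraph V) :
    BddAbove {h : ℝ | ∃ B : Finset (Finset V), ∃ w : Finset V → ℝ,
      IsBramble G B ∧ IsValidWeight B w ∧ h = ∑ A ∈ B, w A} := by
  refine ⟨Fintype.card V, ?_⟩
  rintro _ ⟨B, w, hB, hw, rfl⟩
  simpa using hw.sum_le_card_of_inter_nonempty (U := univ) fun A hA => by
    simpa using hB.nonempty hA

theorem fracHadwiger_le_of_not_hasAdjacentSets (h : ¬HasAdjacentSets G t s) :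
    fracHadwiger G ≤ s * (t - 1) + Fintype.card V / (s + 1) :=
  csSup_le ⟨0, ∅, fun _ => 0, by simp [IsBramble], by simp [IsValidWeight], by simp⟩
    fun _ ⟨_, _, hB, hw, hsum⟩ => hsum ▸ hB.sum_le_of_not_hasAdjacentSets hw h

end Bramble

section Blowup

variable {V β : Type} {G : SimpleGraph V} {P : SimpleGraph (V × β)}

lemma compl_completeBlowup_le (G : SimpleGraph V) (r : ℕ) :
    (completeBlowup G r)ᶜ ≤ lexProd Gᶜ ⊤ := by
  rintro x y ⟨hne, hadj⟩
  by_cases h : x.1 = y.1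
  · exact Or.inr ⟨h, fun h2 => hne (Prod.ext h h2)⟩
  · exact Or.inl ⟨h, fun hG => hadj (Or.inl hG)⟩

/-- An edge of `P ≤ G[β]` projects to an edge of `G` or to a single vertex, so walks project to
walks. -/
lemma SimpleGraph.Connected.induce_image_fst [DecidableEq V] (hP : P ≤ lexProd G ⊤)
    {A : Finset (V × β)} (hA : (P.induce (A : Set (V × β))).Connected) :
    (G.induce (A.image Prod.fst : Set V)).Connected := by
  let proj : ↥(A : Set (V × β)) → ↥(A.image Prod.fst : Set V) :=
    fun z => ⟨z.1.1, mem_image_of_mem _ z.2⟩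
  rw [SimpleGraph.connected_iff]
  refine ⟨?_, hA.nonempty.map proj⟩
  rintro ⟨_, hu⟩ ⟨_, hv⟩
  obtain ⟨x, hx, rfl⟩ := mem_image.1 hu
  obtain ⟨y, hy, rfl⟩ := mem_image.1 hv
  have hxy := hA.preconnected ⟨x, hx⟩ ⟨y, hy⟩
  rw [SimpleGraph.reachable_iff_reflTransGen] at hxy ⊢
  refine Relation.ReflTransGen.lift' proj (fun a b hab => ?_) _ _ hxy
  simp only [onFun]
  rcases hP hab with hG | ⟨heq, -⟩
  · exact Relation.ReflTransGen.single hG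
  · rw [show proj a = proj b from Subtype.ext heq]

/-- Disjoint sets meet the fibre `{v} × β` in disjoint nonempty sets. -/
lemma card_filter_mem_image_fst_le [DecidableEq V] [DecidableEq β] [Fintype β] {ι : Type}
    [Fintype ι] {f : ι → Finset (V × β)} (hf : Pairwise (Disjoint on f)) (v : V) :
    #{i | v ∈ (f i).image Prod.fst} ≤ Fintype.card β := by
  let fibre : ι → Finset (V × β) := fun i => f i ∩ {v} ×ˢ univ
  calc #{i | v ∈ (f i).image Prod.fst}
      ≤ #(({i | v ∈ (f i).image Prod.fst} : Finset ι).biUnion fibre) := by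
        refine card_le_card_biUnion (fun i _ j _ hij => (hf hij).mono inter_subset_left
          inter_subset_left) fun i hi => ?_
        obtain ⟨x, hx, rfl⟩ := mem_image.1 (mem_filter.1 hi).2
        exact ⟨x, mem_inter.2 ⟨hx, by simp⟩⟩
    _ ≤ #({v} ×ˢ (univ : Finset β)) :=
        card_le_card (biUnion_subset.2 fun _ _ => inter_subset_right)
    _ = Fintype.card β := by simp

variable [Fintype V] [DecidableEq V] [Fintype β] [DecidableEq β] [Nonempty β]

/-- The projections of the branch sets, each weighted by `1 / |β|` (weights of repeated
projections add up), form a fractional bramble of `G`. -/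
theorem HasCliqueMinor.le_card_mul_fracHadwiger (hP : P ≤ lexProd G ⊤) {t : ℕ}
    (h : HasCliqueMinor P t) : (t : ℝ) ≤ Fintype.card β * fracHadwiger G := by
  obtain ⟨f, hne, hconn, hdisj, hadj⟩ := h
  let π : Fin t → Finset V := fun i => (f i).image Prod.fst
  let B := univ.image π
  let w : Finset V → ℝ := fun S => #{i | π i = S} * (Fintype.card β : ℝ)⁻¹
  have hsum (g : Finset V → ℝ) : ∑ S ∈ B, #{i | π i = S} * g S = ∑ i, g (π i) := by
    simp [sum_comp g π, nsmul_eq_mul, B]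
  have hβ : (0 : ℝ) < Fintype.card β := by exact_mod_cast Fintype.card_pos
  have hB : IsBramble G B := by
    refine ⟨?_, ?_⟩
    · simp only [B, mem_image, mem_univ, true_and, forall_exists_index, forall_apply_eq_imp_iff]
      exact fun i => (hconn i).induce_image_fst hP
    · simp only [B, mem_image, mem_univ, true_and, forall_exists_index, forall_apply_eq_imp_iff]
      intro i j
      obtain rfl | hij := eq_or_ne i j
      · obtain ⟨x, hx⟩ := hne i
        exact Or.inl ⟨x.1, mem_image_of_mem _ hx, mem_image_of_mem _ hx⟩
      obtain ⟨a, ha, b, hb, hab⟩ := hadj i j hij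
      rcases hP hab with hG | ⟨heq, -⟩
      · exact Or.inr ⟨a.1, mem_image_of_mem _ ha, b.1, mem_image_of_mem _ hb, hG⟩
      · exact Or.inl ⟨a.1, mem_image_of_mem _ ha, heq ▸ mem_image_of_mem _ hb⟩
  have hw : IsValidWeight B w := by
    refine ⟨fun S _ => by positivity, fun v => ?_⟩
    have hv := card_filter_mem_image_fst_le hdisj v
    calc ∑ S ∈ B with v ∈ S, w S
        = ∑ S ∈ B, #{i | π i = S} * (if v ∈ S then (Fintype.card β : ℝ)⁻¹ else 0) := by
          simp only [sum_filter, w, mul_ite, mul_zero]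
      _ = #{i | v ∈ π i} * (Fintype.card β : ℝ)⁻¹ := by
          rw [hsum, ← sum_filter]; simp
      _ ≤ 1 := by
          rw [← div_eq_mul_inv, div_le_one hβ]
          exact_mod_cast hv
  have hle : ∑ S ∈ B, w S ≤ fracHadwiger G :=
    le_csSup (fracHadwiger_bddAbove G) ⟨B, w, hB, hw, rfl⟩
  have hval : ∑ S ∈ B, w S = t * (Fintype.card β : ℝ)⁻¹ := by
    simp [w, hsum fun _ => (Fintype.card β : ℝ)⁻¹]
  rw [hval, ← div_eq_mul_inv, div_le_iff₀ hβ] at hle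
  linarith

lemma HasCliqueMinor.le_card {W : Type} [Fintype W] {H : SimpleGraph W} {t : ℕ}
    (h : HasCliqueMinor H t) : t ≤ Fintype.card W := by
  obtain ⟨f, hne, -, hdisj, -⟩ := h
  choose x hx using hne
  simpa using Fintype.card_le_of_injective x fun i j hij => by
    by_contra hne
    exact disjoint_left.mp (hdisj i j hne) (hx i) (hij ▸ hx j)

theorem hadwigerNumber_le_card_mul_fracHadwiger (hP : P ≤ lexProd G ⊤) :
    (hadwigerNumber P : ℝ) ≤ Fintype.card β * fracHadwiger G :=
  HasCliqueMinor.le_card_mul_fracHadwiger hP <| Nat.sSup_mem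
    ⟨0, show HasCliqueMinor P 0 from
      ⟨Fin.elim0, fun i => i.elim0, fun i => i.elim0, fun i => i.elim0, fun i => i.elim0⟩⟩
    ⟨_, fun _ ht => HasCliqueMinor.le_card ht⟩

end Blowup

section Independence

variable {C β : Type} [Fintype C] [DecidableEq C] [Fintype β] [Nonempty β]

/-- Swapping the `S`-coordinates of two functions is a bijection
`{p ∧ q} × (C → β) ≃ {p} × {q}`. -/
theorem dens_filter_and_of_eqOn (S : Finset C) {p q : (C → β) → Prop} [DecidablePred p]
    [DecidablePred q] (hp : ∀ f g, Set.EqOn f g S → (p f ↔ p g))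
    (hq : ∀ f g, Set.EqOn f g (↑S)ᶜ → (q f ↔ q g)) :
    dens {f | p f ∧ q f} = dens {f | p f} * dens {f | q f} := by
  have hS : ∀ f g : C → β, Set.EqOn (S.piecewise f g) f S :=
    fun f g c hc => piecewise_eq_of_mem _ _ _ hc
  have hSc : ∀ f g : C → β, Set.EqOn (S.piecewise f g) g (↑S)ᶜ :=
    fun f g c hc => piecewise_eq_of_notMem _ _ _ hc
  have hcard : #{f | p f ∧ q f} * Fintype.card (C → β) = #{f | p f} * #{f | q f} := by
    rw [← card_univ, ← card_product, ← card_product]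
    refine card_nbij' (fun x => (S.piecewise x.1 x.2, S.piecewise x.2 x.1))
      (fun x => (S.piecewise x.1 x.2, S.piecewise x.2 x.1)) ?_ ?_ ?_ ?_
    · rintro ⟨f, g⟩ hfg
      simp only [coe_product, coe_filter, mem_univ, true_and, Set.mem_prod, Set.mem_ofPred_eq,
        coe_univ, Set.mem_univ, and_true] at hfg ⊢
      exact ⟨(hp _ _ (hS f g)).2 hfg.1, (hq _ _ (hSc g f)).2 hfg.2⟩
    · rintro ⟨f, g⟩ hfg
      simp only [coe_product, coe_filter, mem_univ, true_and, Set.mem_prod, Set.mem_ofPred_eq,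
        coe_univ, Set.mem_univ, and_true] at hfg ⊢
      exact ⟨(hp _ _ (hS f g)).2 hfg.1, (hq _ _ (hSc f g)).2 hfg.2⟩
    all_goals rintro ⟨f, g⟩ -; simp [piecewise_idem_left, piecewise_idem_right, piecewise_same]
  simp only [dens_eq_card_div_card]
  rw [div_mul_div_comm, eq_div_iff (by positivity), div_mul_eq_mul_div, div_eq_iff (by positivity),
    ← mul_assoc]
  exact_mod_cast congrArg (· * Fintype.card (C → β)) hcard

theorem dens_filter_forall_of_eqOn {ι : Type} [DecidableEq ι] (I : Finset ι)
    (Z : ι → Finset C) (hZ : (I : Set ι).PairwiseDisjoint Z) (p : ι → (C → β) → Prop)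
    [∀ i, DecidablePred (p i)]
    (hp : ∀ i ∈ I, ∀ f g, Set.EqOn f g (Z i) → (p i f ↔ p i g)) :
    dens {f | ∀ i ∈ I, p i f} = ∏ i ∈ I, dens {f | p i f} := by
  induction I using Finset.induction_on with
  | empty => simp
  | insert a I ha ih =>
    rw [prod_insert ha, ← ih (hZ.subset (by simp)) fun i hi => hp i (mem_insert_of_mem hi),
      ← dens_filter_and_of_eqOn (Z a) (hp a (mem_insert_self a I))]
    · simp only [forall_mem_insert]
    · intro f g hfg
      refine forall₂_congr fun i hi => hp i (mem_insert_of_mem hi) f g fun c hc => hfg ?_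
      exact fun hca => disjoint_left.1 (hZ (mem_insert_of_mem hi) (mem_insert_self a I)
        (ne_of_mem_of_not_mem hi ha)) hc hca

lemma dens_filter_forall_mem_eq [DecidableEq β] (Z : Finset C) (b : β) :
    dens {f : C → β | ∀ c ∈ Z, f c = b} = (Fintype.card β : ℚ≥0)⁻¹ ^ #Z := by
  have hpi : ({f : C → β | ∀ c ∈ Z, f c = b} : Finset (C → β)) =
      Fintype.piFinset fun c => if c ∈ Z then {b} else univ := by
    ext f
    simp only [mem_filter, mem_univ, true_and, Fintype.mem_piFinset]
    refine forall_congr' fun c => ?_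
    split_ifs <;> simp [*]
  have hβ : (Fintype.card β : ℚ≥0) ≠ 0 := by simp
  rw [hpi, dens_eq_card_div_card, Fintype.card_piFinset, Fintype.card_fun, Nat.cast_prod,
    Nat.cast_pow, show (Fintype.card β : ℚ≥0)⁻¹ ^ #Z =
      ∏ c, if c ∈ Z then (Fintype.card β : ℚ≥0)⁻¹ else 1 by
        rw [Fintype.prod_ite_mem, prod_const],
    show (Fintype.card β : ℚ≥0) ^ Fintype.card C = ∏ _c : C, (Fintype.card β : ℚ≥0) by
      simp,
    ← prod_div_distrib]
  refine prod_congr rfl fun c _ => ?_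
  split_ifs <;> simp [hβ]

end Independence

lemma card_filter_card_le_le_pow {α : Type} [Fintype α] [DecidableEq α] (s : ℕ) :
    #{S : Finset α | #S ≤ s} ≤ (Fintype.card α + 1) ^ s := by
  calc #{S : Finset α | #S ≤ s} ≤ #(univ : Finset (Fin s → Option α)) := by
        refine card_le_card_of_surjOn (fun g => (univ.image g).eraseNone) fun S hS => ?_
        have hS : S.toList.length ≤ s := by simpa using hS
        refine ⟨fun k => S.toList[k.1]?, mem_univ _, ?_⟩
        ext x
        simp only [mem_eraseNone, mem_image, mem_univ, true_and]
        rw [← mem_toList, List.mem_iff_getElem?]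
        refine ⟨fun ⟨k, hk⟩ => ⟨k, hk⟩, fun ⟨k, hk⟩ => ?_⟩
        have hk' : k < s := (List.getElem?_eq_some_iff.1 hk).1.trans_le hS
        exact ⟨⟨k, hk'⟩, hk⟩
    _ = (Fintype.card α + 1) ^ s := by simp

section RandomGraph

def increasingPairs (t : ℕ) : Finset (Fin t × Fin t) := {x ∈ univ ×ˢ univ | x.1 < x.2}

@[simp]
lemma mem_increasingPairs {t : ℕ} {x : Fin t × Fin t} :
    x ∈ increasingPairs t ↔ x.1 < x.2 := by
  simp [increasingPairs]

lemma card_increasingPairs (t : ℕ) : #(increasingPairs t) = t.choose 2 := by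
  rw [increasingPairs, card_product_filter_lt, card_univ, Fintype.card_fin]

variable {V : Type} {s t : ℕ}

def edgeGraph (f : Sym2 V → Bool) : SimpleGraph V := SimpleGraph.fromEdgeSet {e | f e}

@[simp]
lemma edgeGraph_adj {f : Sym2 V → Bool} {a b : V} :
    (edgeGraph f).Adj a b ↔ f s(a, b) ∧ a ≠ b :=
  SimpleGraph.fromEdgeSet_adj _

lemma compl_edgeGraph (f : Sym2 V → Bool) : (edgeGraph f)ᶜ = edgeGraph fun e => !f e := by
  ext a b
  simp only [SimpleGraph.compl_adj, edgeGraph_adj]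
  cases f s(a, b) <;> simp

variable [DecidableEq V]

instance (f : Sym2 V → Bool) : DecidableRel (edgeGraph f).Adj :=
  fun _ _ => decidable_of_iff _ edgeGraph_adj.symm

lemma exists_adj_edgeGraph_congr {A B : Finset V} {f g : Sym2 V → Bool}
    (h : Set.EqOn f g ((A ×ˢ B).image Sym2.mk.uncurry)) :
    (∃ a ∈ A, ∃ b ∈ B, (edgeGraph f).Adj a b) ↔
      ∃ a ∈ A, ∃ b ∈ B, (edgeGraph g).Adj a b := by
  refine exists_congr fun a => and_congr_right fun ha =>
    exists_congr fun b => and_congr_right fun hb => ?_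
  have hab : f s(a, b) = g s(a, b) := h (mem_image_of_mem _ (mem_product.2 ⟨ha, hb⟩))
  rw [edgeGraph_adj, edgeGraph_adj, hab]

lemma pairwiseDisjoint_image_mk_product {T : Fin t → Finset V} (hT : Pairwise (Disjoint on T)) :
    (increasingPairs t : Set (Fin t × Fin t)).PairwiseDisjoint
      fun x => (T x.1 ×ˢ T x.2).image Sym2.mk.uncurry := by
  have hidx : ∀ {i j v}, v ∈ T i → v ∈ T j → i = j := fun hi hj =>
    by_contra fun hij => disjoint_left.1 (hT hij) hi hj
  intro x hx y hy hxy
  rw [mem_coe, mem_increasingPairs] at hx hy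
  simp only [onFun, disjoint_left, mem_image, mem_product, Prod.exists, not_exists, not_and]
  rintro _ ⟨a, b, ⟨ha, hb⟩, rfl⟩ a' b' ⟨ha', hb'⟩ heq
  rcases Sym2.eq_iff.1 heq with ⟨rfl, rfl⟩ | ⟨rfl, rfl⟩
  · exact hxy (Prod.ext (hidx ha ha') (hidx hb hb'))
  · rw [hidx ha hb', hidx hb ha'] at hx
    exact lt_asymm hx hy

variable [Fintype V]

/-- The event fails when `f` vanishes on the at most `#A * #B` pairs between `A` and `B`. -/
lemma dens_exists_adj_edgeGraph_le (A B : Finset V) :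
    (dens {f : Sym2 V → Bool | ∃ a ∈ A, ∃ b ∈ B, (edgeGraph f).Adj a b} : ℝ) ≤
      1 - 2⁻¹ ^ (#A * #B) := by
  let Z := (A ×ˢ B).image Sym2.mk.uncurry
  let E : Finset (Sym2 V → Bool) := {f | ∃ a ∈ A, ∃ b ∈ B, (edgeGraph f).Adj a b}
  let F : Finset (Sym2 V → Bool) := {f | ∀ e ∈ Z, f e = false}
  have hsub : E ⊆ univ \ F := by
    simp only [E, F, subset_iff, mem_filter, mem_univ, true_and, mem_sdiff]
    rintro f ⟨a, ha, b, hb, hab⟩ hF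
    rw [edgeGraph_adj, hF s(a, b) (mem_image_of_mem _ (mem_product.2 ⟨ha, hb⟩))] at hab
    exact Bool.false_ne_true hab.1
  have hsum : dens E + dens F ≤ 1 :=
    calc dens E + dens F ≤ dens (univ \ F) + dens F := by gcongr
      _ = 1 := by rw [dens_sdiff_add_dens_eq_dens (subset_univ _), dens_univ]
  have hF : dens F = 2⁻¹ ^ #Z := by simpa using dens_filter_forall_mem_eq Z false
  have hZ : (2⁻¹ : ℝ) ^ (#A * #B) ≤ 2⁻¹ ^ #Z :=
    pow_le_pow_of_le_one (by norm_num) (by norm_num) (card_image_le.trans (card_product A B).le)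
  have hsum' := (NNRat.cast_le (K := ℝ)).2 (hF ▸ hsum)
  rw [NNRat.cast_add, NNRat.cast_pow, NNRat.cast_inv, NNRat.cast_ofNat, NNRat.cast_one] at hsum'
  linarith

lemma dens_forall_exists_adj_edgeGraph_le {T : Fin t → Finset V}
    (hT : Pairwise (Disjoint on T)) (hs : ∀ i, #(T i) ≤ s) :
    (dens {f : Sym2 V → Bool | ∀ x ∈ increasingPairs t,
      ∃ a ∈ T x.1, ∃ b ∈ T x.2, (edgeGraph f).Adj a b} : ℝ) ≤
      (1 - 2⁻¹ ^ s ^ 2) ^ t.choose 2 := by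
  have hprod : dens {f : Sym2 V → Bool | ∀ x ∈ increasingPairs t,
      ∃ a ∈ T x.1, ∃ b ∈ T x.2, (edgeGraph f).Adj a b} = ∏ x ∈ increasingPairs t,
      dens {f : Sym2 V → Bool | ∃ a ∈ T x.1, ∃ b ∈ T x.2, (edgeGraph f).Adj a b} := by
    convert dens_filter_forall_of_eqOn _ _ (pairwiseDisjoint_image_mk_product hT)
      (fun x f => ∃ a ∈ T x.1, ∃ b ∈ T x.2, (edgeGraph f).Adj a b)
      fun x _ f g h => exists_adj_edgeGraph_congr h
  rw [hprod, NNRat.cast_prod]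
  calc _ ≤ ∏ _x ∈ increasingPairs t, (1 - 2⁻¹ ^ s ^ 2 : ℝ) :=
        prod_le_prod (fun _ _ => by positivity) fun x _ =>
          (dens_exists_adj_edgeGraph_le _ _).trans (by
            gcongr 1 - ?_
            exact pow_le_pow_of_le_one (by norm_num) (by norm_num)
              (by rw [sq]; exact Nat.mul_le_mul (hs _) (hs _)))
    _ = (1 - 2⁻¹ ^ s ^ 2) ^ t.choose 2 := by rw [prod_const, card_increasingPairs]

open Classical in
theorem dens_hasAdjacentSets_edgeGraph_le (t s : ℕ) :
    (dens {f : Sym2 V → Bool | HasAdjacentSets (edgeGraph f) t s} : ℝ) ≤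
      (Fintype.card V + 1) ^ (s * t) * (1 - 2⁻¹ ^ s ^ 2) ^ t.choose 2 := by
  let 𝒲 : Finset (Fin t → Finset V) :=
    {T ∈ Fintype.piFinset fun _ => {S : Finset V | #S ≤ s} | Pairwise (Disjoint on T)}
  let E : (Fin t → Finset V) → Finset (Sym2 V → Bool) := fun T =>
    {f | ∀ x ∈ increasingPairs t,
      ∃ a ∈ T x.1, ∃ b ∈ T x.2, (edgeGraph f).Adj a b}
  have hsub : ({f | HasAdjacentSets (edgeGraph f) t s} : Finset (Sym2 V → Bool)) ⊆
      𝒲.biUnion E := by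
    rintro f hf
    obtain ⟨T, hs, hdisj, hadj⟩ := (mem_filter.1 hf).2
    refine mem_biUnion.2 ⟨T, ?_, ?_⟩
    · simp [𝒲, Fintype.mem_piFinset, hs, hdisj]
    · simp only [E, mem_filter, mem_univ, true_and, mem_increasingPairs]
      exact fun x hx => hadj hx.ne
  have h𝒲 : (#𝒲 : ℝ) ≤ (Fintype.card V + 1) ^ (s * t) := by
    have : #𝒲 ≤ (Fintype.card V + 1) ^ (s * t) :=
      calc #𝒲 ≤ #(Fintype.piFinset fun _ : Fin t => {S : Finset V | #S ≤ s}) :=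
            card_le_card (filter_subset _ _)
        _ ≤ ((Fintype.card V + 1) ^ s) ^ t := by
            rw [Fintype.card_piFinset, prod_const, card_univ, Fintype.card_fin]
            exact Nat.pow_le_pow_left (card_filter_card_le_le_pow s) t
        _ = _ := (pow_mul _ _ _).symm
    exact_mod_cast this
  calc (dens {f : Sym2 V → Bool | HasAdjacentSets (edgeGraph f) t s} : ℝ)
      ≤ dens (𝒲.biUnion E) := by exact_mod_cast dens_le_dens hsub
    _ ≤ ∑ T ∈ 𝒲, (dens (E T) : ℝ) := by exact_mod_cast dens_biUnion_le
    _ ≤ ∑ _T ∈ 𝒲, (1 - 2⁻¹ ^ s ^ 2 : ℝ) ^ t.choose 2 := sum_le_sum fun T hT =>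
        dens_forall_exists_adj_edgeGraph_le (mem_filter.1 hT).2
          fun i => by simpa using Fintype.mem_piFinset.1 (mem_filter.1 hT).1 i
    _ ≤ _ := by
        rw [sum_const, nsmul_eq_mul]
        exact mul_le_mul_of_nonneg_right h𝒲
          (pow_nonneg (sub_nonneg.2 (pow_le_one₀ (by norm_num) (by norm_num))) _)

/-- `Ḡ_f = G_{¬f}` and `f ↦ ¬f` preserves densities, so both events have the same density. -/
theorem exists_not_hasAdjacentSets_and_compl
    (h : 2 * ((Fintype.card V : ℝ) + 1) ^ (s * t) * (1 - 2⁻¹ ^ s ^ 2) ^ t.choose 2 < 1) :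
    ∃ G : SimpleGraph V, ¬HasAdjacentSets G t s ∧ ¬HasAdjacentSets Gᶜ t s := by
  classical
  let E : Finset (Sym2 V → Bool) := {f | HasAdjacentSets (edgeGraph f) t s}
  let neg : (Sym2 V → Bool) → Sym2 V → Bool := fun f e => !f e
  have hneg : Function.Involutive neg := fun f => by simp [neg]
  have hE' : ({f | HasAdjacentSets (edgeGraph f)ᶜ t s} : Finset (Sym2 V → Bool)) =
      E.image neg := by
    ext f
    simp only [E, mem_filter, mem_univ, true_and, mem_image, compl_edgeGraph]
    exact ⟨fun hf => ⟨neg f, hf, hneg f⟩, by rintro ⟨g, hg, rfl⟩; simpa [neg] using hg⟩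
  have hcover : E ∪ E.image neg ≠ univ := by
    intro hu
    have h2 := dens_union_le E (E.image neg)
    rw [hu, dens_univ, dens_image hneg.bijective] at h2
    have h2' : (1 : ℝ) ≤ dens E + dens E := by exact_mod_cast h2
    have := dens_hasAdjacentSets_edgeGraph_le (V := V) t s
    linarith
  obtain ⟨f, hf⟩ : ∃ f, f ∉ E ∪ E.image neg := by
    by_contra! hall
    exact hcover (eq_univ_of_forall hall)
  rw [← hE', mem_union] at hf
  exact ⟨edgeGraph f, fun hG => hf (Or.inl (by simpa [E] using hG)),
    fun hG => hf (Or.inr (by simpa using hG))⟩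

end RandomGraph

open Real in
/-- With `n = N ^ 2` and `t = ⌊c n⌋` the left side is at most
`exp (1 + 2 N s t - γ t (t - 1) / 2)`, `γ = 2 ^ (-s²)`, and `γ c N ≥ 4 s + 4` makes the
exponent negative. -/
lemma exists_two_mul_pow_mul_pow_choose_lt_one (s : ℕ) {c : ℝ} (hc : 0 < c) :
    ∃ n t : ℕ, 1 ≤ n ∧ (t : ℝ) ≤ c * n ∧
      2 * ((n : ℝ) + 1) ^ (s * t) * (1 - 2⁻¹ ^ s ^ 2) ^ t.choose 2 < 1 := by
  set γ : ℝ := 2⁻¹ ^ s ^ 2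
  have hγ0 : 0 < γ := by positivity
  have hγ1 : γ ≤ 1 := pow_le_one₀ (by norm_num) (by norm_num)
  set N := ⌈(4 * s + 4) / (γ * c)⌉₊
  have hN : 4 * s + 4 ≤ γ * c * N := by
    have := Nat.le_ceil ((4 * s + 4) / (γ * c))
    rw [div_le_iff₀ (by positivity)] at this
    linarith
  have hN1 : (1 : ℝ) ≤ N := by
    have : 0 < N := Nat.ceil_pos.2 (by positivity)
    exact_mod_cast this
  set t := ⌊c * (N ^ 2 : ℕ)⌋₊
  have ht : (t : ℝ) ≤ c * (N ^ 2 : ℕ) := Nat.floor_le (by positivity)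
  have ht' : c * (N ^ 2 : ℕ) < t + 1 := Nat.lt_floor_add_one _
  push_cast at ht ht'
  refine ⟨N ^ 2, t, Nat.one_le_pow _ _ (by exact_mod_cast hN1), by exact_mod_cast ht, ?_⟩
  have hcN : 4 ≤ c * N := by nlinarith
  have ht1 : (1 : ℝ) ≤ t := by nlinarith
  have hlin : 2 * s * N + 1 < γ * (t - 1) / 2 := by nlinarith
  have hexp : 1 + 2 * N * (s * t) - γ * (t * (t - 1) / 2) < 0 := by nlinarith
  have hn : ((N ^ 2 : ℕ) : ℝ) + 1 ≤ exp (2 * N) := by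
    calc ((N ^ 2 : ℕ) : ℝ) + 1 ≤ (N + 1) ^ 2 := by push_cast; nlinarith
      _ ≤ exp N ^ 2 := by gcongr; linarith [add_one_le_exp (N : ℝ)]
      _ = exp (2 * N) := by rw [← exp_nat_mul]; ring_nf
  calc 2 * (((N ^ 2 : ℕ) : ℝ) + 1) ^ (s * t) * (1 - γ) ^ t.choose 2
      ≤ exp 1 * exp (2 * N) ^ (s * t) * exp (-γ) ^ t.choose 2 := by
        gcongr <;> linarith [add_one_le_exp 1, add_one_le_exp (-γ)]
    _ = exp (1 + 2 * N * (s * t) - γ * (t * (t - 1) / 2)) := by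
        rw [← exp_nat_mul, ← exp_nat_mul, ← exp_add, ← exp_add, Nat.cast_choose_two]
        push_cast
        ring_nf
    _ < 1 := exp_lt_one_iff.2 hexp

theorem exists_graph_fracHadwiger_le_and_compl {ε : ℝ} (hε : 0 < ε) :
    ∃ n : ℕ, 1 ≤ n ∧ ∃ G : SimpleGraph (Fin n),
      fracHadwiger G ≤ ε * n ∧ fracHadwiger Gᶜ ≤ ε * n := by
  set s := ⌈2 / ε⌉₊
  have hs : 2 / ε ≤ s := Nat.le_ceil _
  have hs0 : (0 : ℝ) < s := (by positivity : (0 : ℝ) < 2 / ε).trans_le hs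
  obtain ⟨n, t, hn, ht, hprob⟩ :=
    exists_two_mul_pow_mul_pow_choose_lt_one s (c := ε / (2 * s)) (by positivity)
  obtain ⟨G, hG, hGc⟩ :=
    exists_not_hasAdjacentSets_and_compl (V := Fin n) (by simpa using hprob)
  have hbound : s * (t - 1 : ℝ) + Fintype.card (Fin n) / (s + 1) ≤ ε * n := by
    have hst : s * (t - 1 : ℝ) ≤ ε * n / 2 :=
      calc s * (t - 1 : ℝ) ≤ s * (ε / (2 * s) * n) := by gcongr; linarith
        _ = ε * n / 2 := by field_simp
    have hdiv : (n : ℝ) / (s + 1) ≤ ε * n / 2 := by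
      rw [div_le_iff₀ (by positivity)]
      rw [div_le_iff₀ hε] at hs
      nlinarith [(Nat.cast_nonneg n : (0 : ℝ) ≤ n)]
    rw [Fintype.card_fin]
    linarith
  exact ⟨n, hn, G, (fracHadwiger_le_of_not_hasAdjacentSets hG).trans hbound,
    (fracHadwiger_le_of_not_hasAdjacentSets hGc).trans hbound⟩

theorem exists_graph_small_fracHadwiger_self_and_compl_general
    (ε : ℝ) (hε0 : 0 < ε) :
    ∃ n₀ : ℕ, 1 ≤ n₀ ∧ ∃ G : SimpleGraph (Fin n₀),
      fracHadwiger G ≤ ε * (n₀ : ℝ) ∧ fracHadwiger Gᶜ ≤ ε * (n₀ : ℝ) ∧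
      ∀ r : ℕ, 0 < r →
        (hadwigerNumber (completeBlowup G r) : ℝ) ≤ ε * (r : ℝ) * (n₀ : ℝ) ∧
        (hadwigerNumber ((completeBlowup G r)ᶜ) : ℝ) ≤ ε * (r : ℝ) * (n₀ : ℝ) := by
  obtain ⟨n, hn, G, hG, hGc⟩ := exists_graph_fracHadwiger_le_and_compl hε0
  refine ⟨n, hn, G, hG, hGc, fun r hr => ?_⟩
  have : Nonempty (Fin r) := ⟨⟨0, hr⟩⟩
  have hblowup := hadwigerNumber_le_card_mul_fracHadwiger (le_refl (completeBlowup G r))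
  have hcompl := hadwigerNumber_le_card_mul_fracHadwiger (compl_completeBlowup_le G r)
  rw [Fintype.card_fin] at hblowup hcompl
  constructor
  · calc _ ≤ r * fracHadwiger G := hblowup
      _ ≤ ε * r * n := by nlinarith [(Nat.cast_nonneg r : (0 : ℝ) ≤ r)]
  · calc _ ≤ r * fracHadwiger Gᶜ := hcompl
      _ ≤ ε * r * n := by nlinarith [(Nat.cast_nonneg r : (0 : ℝ) ≤ r)]

/-- for every `0 < ε < 1` there is a graph `G` on some `n₀ ≥ 1` vertices with
`h_f(G) ≤ ε·n₀` and `h_f(Ḡ) ≤ ε·n₀`; consequently every complete blow-up of `G` and its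
complement have Hadwiger number at most `ε·r·n₀`. -/
theorem exists_graph_small_fracHadwiger_self_and_compl
    (ε : ℝ) (hε0 : 0 < ε) (hε1 : ε < 1) :
    ∃ n₀ : ℕ, 1 ≤ n₀ ∧ ∃ G : SimpleGraph (Fin n₀),
      fracHadwiger G ≤ ε * (n₀ : ℝ) ∧ fracHadwiger Gᶜ ≤ ε * (n₀ : ℝ) ∧
      ∀ r : ℕ, 0 < r →
        (hadwigerNumber (completeBlowup G r) : ℝ) ≤ ε * (r : ℝ) * (n₀ : ℝ) ∧
        (hadwigerNumber ((completeBlowup G r)ᶜ) : ℝ) ≤ ε * (r : ℝ) * (n₀ : ℝ) :=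
  exists_graph_small_fracHadwiger_self_and_compl_general ε hε0
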